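/- arXiv:2106.05564 — 2 statements merged into one kernel-verified Lean document; each statement's English description precedes it below -/
import Mathlib

section
/- Let T > 0, ω₀ = 2π/T, and let L ≥ 1 and K ≥ 2L be integers. Let h : ℝ → ℝ be Lebesgue integrable with Fourier transform ĥ(ω) = ∫_ℝ h(t) e^{−iωt} dt satisfying ĥ(kω₀) ≠ 0 for every integer k with 1 ≤ |k| ≤ K. For amplitudes a₁, …, a_L > 0 and pairwise distinct delays τ₁, …, τ_L ∈ [0, T), define the filtered signal y_{a,τ}(t) = Σ_{k ∈ {−K,…,−1,1,…,K}} (1/T) ĥ(kω₀) (Σ_{ℓ=1}^{L} a_ℓ e^{−i k ω₀ τ_ℓ}) e^{i k ω₀ t}. Let 0 ≤ t₁ < t₂ < ⋯ < t_N < T with N ≥ 2K + 2. If two such parameter sets (a, τ) and (a′, τ′) satisfy ∫_{t_n}^{t_{n+1}} y_{a,τ}(t) dt = ∫_{t_n}^{t_{n+1}} y_{a′,τ′}(t) dt for every n = 1, …, N−1, then there exists a permutation π of {1, …, L} such that τ′_ℓ = τ_{π(ℓ)} and a′_ℓ = a_{π(ℓ)} for all ℓ. -/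
/-!
Integrating over `[t_n, t_{n+1}]` turns the filtered signal into increments of its antiderivative,
which, because the zero frequency is excluded, is again a trigonometric polynomial with frequencies
in `{-K, …, K}`. Equal measurements make the antiderivative of the difference of the two signals
constant at the `N > 2K` distinct points `exp (i ω₀ t_n)` of the unit circle; multiplied by `z ^ K`
this is a polynomial of degree `≤ 2K`, hence zero, so all filtered Fourier coefficients agree.
Dividing by `ĥ(k ω₀) ≠ 0`, the power sums `∑ a_ℓ exp (i k ω₀ τ_ℓ)` agree for `k = 1, …, 2L`, and a
Vandermonde argument on the at most `2L` atoms of both parameter sets matches them one to one.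
-/

open MeasureTheory Complex

noncomputable def nonzeroFreqs (K : ℕ) : Finset ℤ := (Finset.Icc (-K : ℤ) K).erase 0

theorem mem_nonzeroFreqs {K : ℕ} {k : ℤ} : k ∈ nonzeroFreqs K ↔ k ≠ 0 ∧ -K ≤ k ∧ k ≤ K := by
  simp [nonzeroFreqs]

theorem sum_fin_two_mul_eq_sum_nonzeroFreqs {M : Type*} [AddCommMonoid M] (K : ℕ) (F : ℤ → M) :
    ∑ j : Fin (2 * K), F (if (j : ℕ) < K then (j : ℤ) - K else (j : ℤ) - K + 1) =
      ∑ k ∈ nonzeroFreqs K, F k := by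
  refine Finset.sum_bij (fun j _ => if (j : ℕ) < K then (j : ℤ) - K else (j : ℤ) - K + 1)
    (fun j _ => ?_) (fun i _ j _ hij => ?_) (fun k hk => ?_) fun _ _ => rfl
  · have := j.isLt
    rw [mem_nonzeroFreqs]
    split_ifs <;> omega
  · have := i.isLt
    have := j.isLt
    ext
    split_ifs at hij <;> omega
  · obtain ⟨hk0, hk⟩ := mem_nonzeroFreqs.mp hk
    by_cases hneg : k < 0
    · exact ⟨⟨(k + K).toNat, by omega⟩, Finset.mem_univ _, by simp only; split_ifs <;> omega⟩
    · exact ⟨⟨(k + K - 1).toNat, by omega⟩, Finset.mem_univ _, by simp only; split_ifs <;> omega⟩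

noncomputable def trigSum (s : Finset ℤ) (c : ℤ → ℂ) (ω u : ℝ) : ℂ :=
  ∑ k ∈ s, c k * cexp (I * k * ω * u)

theorem trigSum_sub (s : Finset ℤ) (c c' : ℤ → ℂ) (ω u : ℝ) :
    trigSum s c ω u - trigSum s c' ω u = trigSum s (fun k => c k - c' k) ω u := by
  simp only [trigSum, ← Finset.sum_sub_distrib, sub_mul]

theorem trigSum_eq_sum_mul_zpow (s : Finset ℤ) (c : ℤ → ℂ) (ω u : ℝ) :
    trigSum s c ω u = ∑ k ∈ s, c k * cexp (I * ω * u) ^ k := by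
  refine Finset.sum_congr rfl fun k _ => ?_
  rw [← exp_int_mul]
  ring_nf

theorem integral_trigSum {s : Finset ℤ} (hs : 0 ∉ s) {ω : ℝ} (hω : ω ≠ 0) (c : ℤ → ℂ) (a b : ℝ) :
    ∫ u in a..b, trigSum s c ω u =
      trigSum s (fun k => c k / (I * k * ω)) ω b - trigSum s (fun k => c k / (I * k * ω)) ω a := by
  have hk : ∀ k ∈ s, I * k * ω ≠ 0 := fun k hk => by
    have : k ≠ 0 := ne_of_mem_of_not_mem hk hs
    simp [I_ne_zero, hω, this]
  simp only [trigSum, ← Finset.sum_sub_distrib]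
  rw [intervalIntegral.integral_finsetSum fun k _ =>
    (by fun_prop : Continuous fun u : ℝ => c k * cexp (I * k * ω * u)).intervalIntegrable _ _]
  refine Finset.sum_congr rfl fun k hks => ?_
  rw [intervalIntegral.integral_const_mul, integral_exp_mul_complex (hk k hks)]
  ring

open Finset Polynomial in
theorem eq_zero_of_sum_mul_zpow_eq_const {F : Type*} [Field F] {K : ℕ} {s : Finset ℤ}
    (hs : s ⊆ nonzeroFreqs K) {b : ℤ → F} {c : F} {Z : Finset F} (hZ0 : 0 ∉ Z)
    (hZ : 2 * K < #Z) (h : ∀ z ∈ Z, ∑ k ∈ s, b k * z ^ k = c) : ∀ k ∈ s, b k = 0 := by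
  have hs' : ∀ k ∈ s, k ≠ 0 ∧ -(K : ℤ) ≤ k ∧ k ≤ K := fun k hk =>
    mem_nonzeroFreqs.mp (hs hk)
  -- multiplying by `X ^ K` turns the Laurent polynomial `∑ b k X ^ k - c` into a polynomial
  set p : F[X] := ∑ k ∈ s, C (b k) * X ^ (k + K).toNat - C c * X ^ K
  have hdeg : p.natDegree ≤ 2 * K := by
    refine (natDegree_sub_le _ _).trans (max_le ?_ ((natDegree_C_mul_X_pow_le _ _).trans ?_))
    · refine natDegree_sum_le_of_forall_le _ _ fun k hk => ?_
      have := hs' k hk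
      exact (natDegree_C_mul_X_pow_le _ _).trans (by omega)
    · omega
  have hroots : ∀ z ∈ Z, p.eval z = 0 := fun z hz => by
    have hz0 : z ≠ 0 := ne_of_mem_of_not_mem hz hZ0
    have hpow : ∀ k ∈ s, z ^ (k + K).toNat = z ^ k * z ^ K := fun k hk => by
      have := hs' k hk
      rw [← zpow_natCast, Int.toNat_of_nonneg (by omega), zpow_add₀ hz0, zpow_natCast]
    simp only [p, eval_sub, eval_finsetSum, eval_mul, eval_C, eval_pow, eval_X]
    rw [Finset.sum_congr rfl fun k hk => by rw [hpow k hk, ← mul_assoc], ← Finset.sum_mul, h z hz,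
      sub_self]
  have hp : p = 0 := eq_zero_of_natDegree_lt_card_of_eval_eq_zero' p Z hroots (by omega)
  intro k hk
  have hk' := hs' k hk
  have hcoeff : p.coeff (k + K).toNat = b k := by
    simp only [p, coeff_sub, finsetSum_coeff, coeff_C_mul_X_pow]
    rw [Finset.sum_eq_single k (fun k' hk'' hne => if_neg (by have := hs' k' hk''; omega))
      (absurd hk), if_pos rfl, if_neg (by omega), sub_zero]
  rw [← hcoeff, hp, coeff_zero]

theorem Fin.apply_eq_of_apply_eq_succ {α : Type*} {N : ℕ} (g : Fin N → α)
    (h : ∀ n : Fin (N - 1), g ⟨n, by have := n.isLt; omega⟩ = g ⟨n + 1, by have := n.isLt; omega⟩)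
    (m m' : Fin N) : g m = g m' := by
  suffices ∀ n (hn : n < N), g ⟨n, hn⟩ = g ⟨0, by omega⟩ by
    rw [this m m.isLt, this m' m'.isLt]
  intro n
  induction n with
  | zero => exact fun _ => rfl
  | succ n ih => exact fun hn => (h ⟨n, by omega⟩).symm.trans (ih (by omega))

theorem injOn_cexp_two_pi_div_mul {T : ℝ} (hT : 0 < T) :
    Set.InjOn (fun x : ℝ => cexp (I * ↑(2 * Real.pi / T) * x)) (Set.Ico 0 T) := by
  intro x hx y hy hxy
  have hω : 0 < 2 * Real.pi / T := by positivity
  have hmem : ∀ x ∈ Set.Ico 0 T, 2 * Real.pi / T * x ∈ Set.Ico 0 (2 * Real.pi) := fun x hx =>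
    ⟨mul_nonneg hω.le hx.1, (mul_lt_mul_of_pos_left hx.2 hω).trans_eq (by field_simp)⟩
  have hcircle : Circle.exp (2 * Real.pi / T * x) = Circle.exp (2 * Real.pi / T * y) := by
    ext
    simp only [Circle.coe_exp]
    push_cast at hxy ⊢
    convert hxy using 2 <;> ring
  exact mul_left_cancel₀ hω.ne' (Circle.exp_injOn_Ico (by simp) (hmem x hx) (hmem y hy) hcircle)

theorem eqOn_of_integral_trigSum_eq {K N : ℕ} (hN : 2 * K < N) {s : Finset ℤ}
    (hs : s ⊆ nonzeroFreqs K) {ω : ℝ} (hω : ω ≠ 0) {c c' : ℤ → ℂ} {t : Fin N → ℝ}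
    (ht : Function.Injective fun n => cexp (I * ω * t n))
    (h : ∀ n : Fin (N - 1),
      ∫ u in t ⟨n, by have := n.isLt; omega⟩..t ⟨n + 1, by have := n.isLt; omega⟩,
        trigSum s c ω u =
      ∫ u in t ⟨n, by have := n.isLt; omega⟩..t ⟨n + 1, by have := n.isLt; omega⟩,
        trigSum s c' ω u) :
    ∀ k ∈ s, c k = c' k := by
  have hs0 : 0 ∉ s := fun h0 => (mem_nonzeroFreqs.mp (hs h0)).1 rfl
  set d : ℤ → ℂ := fun k => (c k - c' k) / (I * k * ω)
  have hprim : ∀ a b : ℝ, (∫ u in a..b, trigSum s c ω u) - ∫ u in a..b, trigSum s c' ω u =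
      trigSum s d ω b - trigSum s d ω a := fun a b => by
    rw [integral_trigSum hs0 hω, integral_trigSum hs0 hω, sub_sub_sub_comm, trigSum_sub,
      trigSum_sub]
    simp only [d, sub_div]
  have hconst : ∀ n, trigSum s d ω (t n) = trigSum s d ω (t ⟨0, by omega⟩) :=
    fun n => Fin.apply_eq_of_apply_eq_succ (fun n => trigSum s d ω (t n)) (fun n => by
      have := hprim (t ⟨n, by have := n.isLt; omega⟩) (t ⟨n + 1, by have := n.isLt; omega⟩)
      rw [h n, sub_self, eq_comm, sub_eq_zero] at this
      exact this.symm) _ _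
  have hd : ∀ k ∈ s, d k = 0 := eq_zero_of_sum_mul_zpow_eq_const hs
    (Z := Finset.univ.image fun n => cexp (I * ω * t n)) (by simp [exp_ne_zero])
    (by rwa [Finset.card_image_of_injective _ ht, Finset.card_univ, Fintype.card_fin])
    (by
      simp only [Finset.mem_image]
      rintro _ ⟨n, -, rfl⟩
      rw [← trigSum_eq_sum_mul_zpow, hconst])
  intro k hk
  have hk0 : I * k * ω ≠ 0 := by simp [I_ne_zero, hω, ne_of_mem_of_not_mem hk hs0]
  exact sub_eq_zero.mp ((div_eq_zero_iff.mp (hd k hk)).resolve_right hk0)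

open Finset in
theorem eq_zero_of_sum_mul_pow_eq_zero {F : Type*} [Field F] {S : Finset F} (hS0 : 0 ∉ S)
    {g : F → F} (h : ∀ k ∈ Icc 1 #S, ∑ z ∈ S, g z * z ^ k = 0) : ∀ z ∈ S, g z = 0 := by
  set e := S.equivFin.symm
  -- Vandermonde with the weights `g z * z` and the exponents `0, …, #S - 1`
  have hweights : (fun i => g (e i) * e i) = 0 := by
    refine Matrix.eq_zero_of_forall_pow_sum_mul_pow_eq_zero
      (Subtype.val_injective.comp e.injective) fun i => ?_
    have hi := h (i + 1) (by simp)
    rw [← Finset.sum_coe_sort, ← e.sum_comp] at hi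
    simpa [pow_succ', mul_assoc] using hi
  intro z hz
  have := congrFun hweights (e.symm ⟨z, hz⟩)
  simpa [ne_of_mem_of_not_mem hz hS0] using this

theorem Finset.sum_extend_mul {ι F : Type*} [Fintype ι] [DecidableEq F] [CommSemiring F]
    {w : ι → F} (hw : Function.Injective w) (c : ι → F) (φ : F → F) {S : Finset F}
    (hS : ∀ i, w i ∈ S) :
    ∑ z ∈ S, Function.extend w c 0 z * φ z = ∑ i, c i * φ (w i) := by
  rw [← sum_subset (s₁ := univ.image w) (by simpa [subset_iff] using hS)
    fun z _ hz => by rw [Function.extend_apply' _ _ _ (by simpa using hz), Pi.zero_apply, zero_mul],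
    sum_image hw.injOn]
  simp only [hw.extend_apply]

open Finset in
theorem exists_perm_of_sum_mul_pow_eq {ι F : Type*} [Fintype ι] [Field F] {w w' : ι → F}
    (hw : Function.Injective w) (hw' : Function.Injective w') (hw0 : ∀ i, w i ≠ 0)
    (hw'0 : ∀ i, w' i ≠ 0) {c c' : ι → F} (hc' : ∀ i, c' i ≠ 0)
    (h : ∀ k ∈ Icc 1 (2 * Fintype.card ι), ∑ i, c i * w i ^ k = ∑ i, c' i * w' i ^ k) :
    ∃ π : Equiv.Perm ι, ∀ i, w' i = w (π i) ∧ c' i = c (π i) := by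
  classical
  set S := univ.image w ∪ univ.image w'
  have hwS : ∀ i, w i ∈ S := fun i => mem_union_left _ (mem_image_of_mem w (mem_univ i))
  have hw'S : ∀ i, w' i ∈ S := fun i => mem_union_right _ (mem_image_of_mem w' (mem_univ i))
  have hcard : #S ≤ 2 * Fintype.card ι :=
    (card_union_le _ _).trans (two_mul (Fintype.card ι) ▸ add_le_add card_image_le card_image_le)
  have hS0 : 0 ∉ S := by
    simp only [S, mem_union, mem_image]
    rintro (⟨i, -, hi⟩ | ⟨i, -, hi⟩)
    exacts [hw0 i hi, hw'0 i hi]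
  set g := Function.extend w c 0 - Function.extend w' c' 0
  have hg : ∀ z ∈ S, g z = 0 := eq_zero_of_sum_mul_pow_eq_zero hS0 fun k hk => by
    simp only [g, Pi.sub_apply, sub_mul, sum_sub_distrib, Finset.sum_extend_mul hw _ _ hwS,
      Finset.sum_extend_mul hw' _ _ hw'S]
    rw [h k (by simp at hk ⊢; omega), sub_self]
  have hmatch : ∀ i, ∃ j, w j = w' i ∧ c j = c' i := fun i => by
    have hgi : Function.extend w c 0 (w' i) = c' i := by
      simpa [g, sub_eq_zero, hw'.extend_apply] using hg _ (hw'S i)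
    by_cases hrange : ∃ j, w j = w' i
    · obtain ⟨j, hj⟩ := hrange
      exact ⟨j, hj, by rw [← hgi, ← hj, hw.extend_apply]⟩
    · rw [Function.extend_apply' _ _ _ hrange] at hgi
      exact absurd hgi.symm (hc' i)
  choose σ hσw hσc using hmatch
  have hσ : Function.Injective σ := fun i j hij => hw' (by rw [← hσw, hij, hσw])
  exact ⟨Equiv.ofBijective σ hσ.bijective_of_finite, fun i => ⟨(hσw i).symm, (hσc i).symm⟩⟩

/-- **Theorem 4 (FRI-TEM).** Perfect recovery of the FRI parameters (off-grid delays)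
from `N ≥ 2K + 2` IF-TEM measurements, with a sampling kernel passing the
Fourier-series coefficients indexed by `k ∈ {-K,…,-1,1,…,K}` and `K ≥ 2L`.
The column index `j : Fin (2K)` corresponds to `k = j - K` for `j < K` and
`k = j - K + 1` for `j ≥ K`. -/
theorem fri_tem_perfect_recovery_no_zero_freq
    (T : ℝ) (hT : 0 < T) (L K : ℕ) (hKL : 2 * L ≤ K)
    (hhat : ℝ → ℂ)
    (hhat_ne : ∀ k : ℤ, 1 ≤ |k| → |k| ≤ (K : ℤ) → hhat (k * (2 * Real.pi / T)) ≠ 0)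
    (y : (Fin L → ℝ) → (Fin L → ℝ) → ℝ → ℂ)
    (hy_def : ∀ (α τ : Fin L → ℝ) (u : ℝ),
      y α τ u = ∑ j : Fin (2 * K),
        (1 / (T : ℂ)) * hhat
            (((if (j : ℕ) < K then (j : ℤ) - (K : ℤ) else (j : ℤ) - (K : ℤ) + 1) : ℤ)
              * (2 * Real.pi / T))
          * (∑ ℓ : Fin L, (α ℓ : ℂ) *
              Complex.exp (-Complex.I
                * (((if (j : ℕ) < K then (j : ℤ) - (K : ℤ) else (j : ℤ) - (K : ℤ) + 1) : ℤ) : ℂ)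
                * ((2 * Real.pi / T : ℝ) : ℂ) * (τ ℓ : ℂ)))
          * Complex.exp (Complex.I
              * (((if (j : ℕ) < K then (j : ℤ) - (K : ℤ) else (j : ℤ) - (K : ℤ) + 1) : ℤ) : ℂ)
              * ((2 * Real.pi / T : ℝ) : ℂ) * (u : ℂ)))
    (a a' τ τ' : Fin L → ℝ)
    (ha'_pos : ∀ ℓ, 0 < a' ℓ)
    (hτ_mem : ∀ ℓ, τ ℓ ∈ Set.Ico 0 T) (hτ'_mem : ∀ ℓ, τ' ℓ ∈ Set.Ico 0 T)
    (hτ_inj : Function.Injective τ) (hτ'_inj : Function.Injective τ')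
    (N : ℕ) (hN : 2 * K + 2 ≤ N)
    (t : Fin N → ℝ) (ht_mono : StrictMono t)
    (ht_nonneg : ∀ n, 0 ≤ t n) (ht_lt : ∀ n, t n < T)
    (hmeas : ∀ n : Fin (N - 1),
      (∫ u in (t ⟨(n : ℕ), by have := n.isLt; omega⟩)..(t ⟨(n : ℕ) + 1, by have := n.isLt; omega⟩),
        y a τ u)
      = ∫ u in (t ⟨(n : ℕ), by have := n.isLt; omega⟩)..(t ⟨(n : ℕ) + 1, by have := n.isLt; omega⟩),
        y a' τ' u) :
    ∃ π : Equiv.Perm (Fin L), ∀ ℓ : Fin L, τ' ℓ = τ (π ℓ) ∧ a' ℓ = a (π ℓ) := by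
  set ω : ℝ := 2 * Real.pi / T
  set A : (Fin L → ℝ) → (Fin L → ℝ) → ℤ → ℂ := fun α τ k =>
    1 / (T : ℂ) * hhat (k * ω) * ∑ ℓ, (α ℓ : ℂ) * cexp (-I * k * ω * τ ℓ)
  have hy : ∀ α τ, y α τ = trigSum (nonzeroFreqs K) (A α τ) ω := fun α τ => funext fun u =>
    (hy_def α τ u).trans (sum_fin_two_mul_eq_sum_nonzeroFreqs K
      fun k => A α τ k * cexp (I * k * ω * u))
  rw [hy, hy] at hmeas
  have hcircle := injOn_cexp_two_pi_div_mul hT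
  have hA : ∀ k ∈ nonzeroFreqs K, A a τ k = A a' τ' k :=
    eqOn_of_integral_trigSum_eq (by omega) subset_rfl (by positivity) (fun m n hmn =>
      ht_mono.injective (hcircle ⟨ht_nonneg m, ht_lt m⟩ ⟨ht_nonneg n, ht_lt n⟩ hmn)) hmeas
  set w : (Fin L → ℝ) → Fin L → ℂ := fun τ ℓ => cexp (I * ω * τ ℓ)
  have hw : ∀ τ : Fin L → ℝ, (∀ ℓ, τ ℓ ∈ Set.Ico 0 T) → Function.Injective τ →
      Function.Injective (w τ) := fun τ hmem hinj _ _ hw => hinj (hcircle (hmem _) (hmem _) hw)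
  -- the frequencies `-1, …, -2L` give the power sums of the atoms `exp (i ω τ_ℓ)`
  have hmoments : ∀ m ∈ Finset.Icc 1 (2 * Fintype.card (Fin L)),
      ∑ ℓ, (a ℓ : ℂ) * w τ ℓ ^ m = ∑ ℓ, (a' ℓ : ℂ) * w τ' ℓ ^ m := by
    intro m hm
    rw [Finset.mem_Icc, Fintype.card_fin] at hm
    have hk : -(m : ℤ) ∈ nonzeroFreqs K := mem_nonzeroFreqs.mpr ⟨by omega, by omega, by omega⟩
    have hne : 1 / (T : ℂ) * hhat (((-m : ℤ) : ℝ) * ω) ≠ 0 :=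
      mul_ne_zero (by simp [hT.ne']) (hhat_ne _ (by simp; omega) (by simp; omega))
    have hpow : ∀ (τ : Fin L → ℝ) ℓ, cexp (-I * ((-m : ℤ) : ℂ) * ω * τ ℓ) = w τ ℓ ^ m :=
      fun τ ℓ => by
        rw [← exp_nat_mul]
        push_cast
        ring_nf
    simpa only [A, hpow] using mul_left_cancel₀ hne (hA _ hk)
  obtain ⟨π, hπ⟩ := exists_perm_of_sum_mul_pow_eq (hw τ hτ_mem hτ_inj) (hw τ' hτ'_mem hτ'_inj)
    (fun _ => exp_ne_zero _) (fun _ => exp_ne_zero _)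
    (fun ℓ => ofReal_ne_zero.mpr (ha'_pos ℓ).ne') hmoments
  exact ⟨π, fun ℓ => ⟨hcircle (hτ'_mem ℓ) (hτ_mem (π ℓ)) (hπ ℓ).1, ofReal_injective (hπ ℓ).2⟩⟩
end

section
/- Let K be a positive integer, T > 0, ω₀ = 2π/T, and let f(t) = Σ_{k=−K}^{K} c_k e^{i k ω₀ t} with complex coefficients satisfying c_{−k} = conj(c_k) for all k (so f is a real-valued trigonometric polynomial of degree K and period T). Let a, d ∈ ℝ with a ≠ 0. Then the set {t ∈ (0, T] : f(t) = a t + d} contains at most 2K + 1 points. -/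
/-!
Rolle's theorem applied to `Re f(u) - (a u + d)` between consecutive intersection points gives
one point fewer at which the derivative of the real-valued `f` equals `a`. That derivative is
again a real trigonometric polynomial of degree `K`, with vanishing constant term, so
`f' - a` has constant term `-a ≠ 0`. Multiplied by `e^{iKωu}` it becomes a nonzero polynomial
of degree at most `2K` in `z = e^{iωu}`, and `u ↦ e^{iωu}` is injective on a period, so `f' = a`
at no more than `2K` points of `(0, T]`.
-/

open Complex Polynomial Finset ComplexConjugate

theorem exists_finset_hasDerivAt_eq_zero_card_le_succ {f f' : ℝ → ℝ} {I : Set ℝ}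
    (hI : I.OrdConnected) (hf : ∀ x ∈ I, HasDerivAt f (f' x) x) (s : Finset ℝ)
    (hs : ∀ x ∈ s, x ∈ I ∧ f x = 0) :
    ∃ t : Finset ℝ, s.card ≤ t.card + 1 ∧ ∀ x ∈ t, x ∈ I ∧ f' x = 0 := by
  have hRolle : ∀ p : ℝ × ℝ, ∃ z, p.1 ∈ s → p.2 ∈ s → p.1 < p.2 →
      z ∈ Set.Ioo p.1 p.2 ∧ f' z = 0 := by
    rintro ⟨x, y⟩
    by_cases hxy : x ∈ s ∧ y ∈ s ∧ x < y
    · obtain ⟨hx, hy, hlt⟩ := hxy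
      have hsub : Set.Icc x y ⊆ I := hI.out (hs x hx).1 (hs y hy).1
      obtain ⟨z, hz, hz'⟩ := exists_hasDerivAt_eq_zero hlt
        (fun w hw => (hf w (hsub hw)).continuousAt.continuousWithinAt)
        (by rw [(hs x hx).2, (hs y hy).2])
        (fun w hw => hf w (hsub (Set.Ioo_subset_Icc_self hw)))
      exact ⟨z, fun _ _ _ => ⟨hz, hz'⟩⟩
    · exact ⟨0, fun hx hy hlt => absurd ⟨hx, hy, hlt⟩ hxy⟩
  choose z hz using hRolle
  refine ⟨((s ×ˢ s).filter fun p => p.1 < p.2).image z,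
    card_le_of_interleaved fun x hx y hy hxy _ => ?_, ?_⟩
  · refine ⟨z (x, y), mem_image_of_mem z ?_, (hz (x, y) hx hy hxy).1⟩
    simp [hx, hy, hxy]
  · simp only [mem_image, mem_filter, mem_product, Prod.exists]
    rintro w ⟨x, y, ⟨⟨hx, hy⟩, hxy⟩, rfl⟩
    obtain ⟨hzxy, hfz⟩ := hz (x, y) hx hy hxy
    exact ⟨hI.out (hs x hx).1 (hs y hy).1 (Set.Ioo_subset_Icc_self hzxy), hfz⟩

theorem injOn_exp_mul_I_Ioc {T : ℝ} (hT : 0 < T) (x : ℝ) :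
    Set.InjOn (fun u : ℝ => exp (I * ((2 * Real.pi / T : ℝ) : ℂ) * u)) (Set.Ioc x (x + T)) := by
  intro u hu v hv huv
  obtain ⟨n, hn⟩ := exp_eq_exp_iff_exists_int.mp huv
  have him := congrArg Complex.im hn
  simp only [mul_im, I_re, I_im, ofReal_re, ofReal_im, add_im, intCast_re, intCast_im,
    re_ofNat, im_ofNat, mul_re] at him
  have hdiff : u - v = n * T := by
    field_simp at him
    nlinarith [Real.pi_pos]
  have hn0 : n = 0 := by
    have h1 : (n : ℝ) < 1 := by nlinarith [hu.1, hu.2, hv.1, hv.2]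
    have h2 : (-1 : ℝ) < n := by nlinarith [hu.1, hu.2, hv.1, hv.2]
    have : n < 1 ∧ -1 < n := ⟨by exact_mod_cast h1, by exact_mod_cast h2⟩
    omega
  simpa [hn0, sub_eq_zero] using hdiff

noncomputable def trigPoly (K : ℕ) (b : ℤ → ℂ) (ω u : ℝ) : ℂ :=
  ∑ k ∈ Icc (-(K : ℤ)) K, b k * exp (I * k * ω * u)

theorem hasDerivAt_trigPoly (K : ℕ) (b : ℤ → ℂ) (ω u : ℝ) :
    HasDerivAt (trigPoly K b ω) (trigPoly K (fun k => I * k * ω * b k) ω u) u := by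
  unfold trigPoly
  refine HasDerivAt.fun_sum fun k _ => ?_
  have h := (((hasDerivAt_id (u : ℂ)).const_mul (I * k * ω)).cexp.comp_ofReal).const_mul (b k)
  exact h.congr_deriv (by simp only [id, mul_one]; ring)

theorem conj_trigPoly {K : ℕ} {b : ℤ → ℂ}
    (hb : ∀ k ∈ Icc (-(K : ℤ)) K, b (-k) = conj (b k)) (ω u : ℝ) :
    conj (trigPoly K b ω u) = trigPoly K b ω u := by
  unfold trigPoly
  rw [map_sum]
  refine sum_nbij' (fun k => -k) (fun k => -k) ?_ ?_ (fun _ _ => neg_neg _)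
    (fun _ _ => neg_neg _) ?_
  · intro k hk; simp only [mem_Icc] at hk ⊢; omega
  · intro k hk; simp only [mem_Icc] at hk ⊢; omega
  · intro k hk
    rw [map_mul, ← exp_conj, hb k hk]
    simp

theorem trigPoly_sub_const (K : ℕ) (b : ℤ → ℂ) (ω u : ℝ) (w : ℂ) :
    trigPoly K b ω u - w = trigPoly K (b - Pi.single 0 w) ω u := by
  unfold trigPoly
  simp only [Pi.sub_apply, sub_mul, sum_sub_distrib]
  congr 1
  rw [sum_eq_single_of_mem 0 (by simp)]
  · simp
  · intro k _ hk
    simp [hk]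

noncomputable def trigPolyNumerator (K : ℕ) (b : ℤ → ℂ) : ℂ[X] :=
  ∑ k ∈ Icc (-(K : ℤ)) K, C (b k) * X ^ (k + K).toNat

theorem natDegree_trigPolyNumerator_le (K : ℕ) (b : ℤ → ℂ) :
    (trigPolyNumerator K b).natDegree ≤ 2 * K := by
  refine natDegree_sum_le_of_forall_le _ _ fun k hk => ?_
  rw [mem_Icc] at hk
  refine (natDegree_C_mul_le _ _).trans ?_
  rw [natDegree_X_pow]
  omega

theorem coeff_trigPolyNumerator {K : ℕ} (b : ℤ → ℂ) {k : ℤ} (hk : k ∈ Icc (-(K : ℤ)) K) :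
    (trigPolyNumerator K b).coeff (k + K).toNat = b k := by
  rw [trigPolyNumerator, finsetSum_coeff, sum_eq_single_of_mem k hk]
  · simp
  · intro j hj hjk
    rw [mem_Icc] at hj hk
    rw [coeff_C_mul_X_pow, if_neg (by omega)]

theorem eval_exp_trigPolyNumerator (K : ℕ) (b : ℤ → ℂ) (ω u : ℝ) :
    (trigPolyNumerator K b).eval (exp (I * ω * u)) = exp (K * (I * ω * u)) * trigPoly K b ω u := by
  rw [trigPolyNumerator, eval_finsetSum, trigPoly, mul_sum]
  refine sum_congr rfl fun k hk => ?_
  rw [mem_Icc] at hk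
  have hpow : ((k + K).toNat : ℂ) = k + K := by
    exact_mod_cast Int.toNat_of_nonneg (by omega : 0 ≤ k + K)
  rw [eval_C_mul, eval_pow, eval_X, ← exp_nat_mul, hpow, mul_left_comm (exp _), ← exp_add]
  ring_nf

theorem card_le_of_trigPoly_eq_zero {K : ℕ} {b : ℤ → ℂ} (hb : ∃ k ∈ Icc (-(K : ℤ)) K, b k ≠ 0)
    {ω : ℝ} {s : Finset ℝ} (hinj : Set.InjOn (fun u : ℝ => exp (I * ω * u)) s)
    (hs : ∀ u ∈ s, trigPoly K b ω u = 0) : s.card ≤ 2 * K := by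
  obtain ⟨k, hk, hbk⟩ := hb
  have hp : trigPolyNumerator K b ≠ 0 := fun h =>
    hbk (by rw [← coeff_trigPolyNumerator b hk, h, coeff_zero])
  calc s.card = (s.image fun u : ℝ => exp (I * ω * u)).card := (card_image_of_injOn hinj).symm
    _ ≤ (trigPolyNumerator K b).natDegree := card_le_degree_of_subset_roots fun z hz => by
        obtain ⟨u, hu, rfl⟩ := mem_image.1 hz
        rw [mem_roots hp, IsRoot, eval_exp_trigPolyNumerator, hs u hu, mul_zero]
    _ ≤ 2 * K := natDegree_trigPolyNumerator_le K b

theorem trig_poly_line_intersections_general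
    (K : ℕ) (T : ℝ) (hT : 0 < T)
    (c : ℤ → ℂ)
    (hconj : ∀ k : ℤ, k ∈ Finset.Icc (-(K : ℤ)) (K : ℤ) →
      c (-k) = (starRingEnd ℂ) (c k))
    (f : ℝ → ℂ)
    (hf : ∀ u : ℝ, f u = ∑ k ∈ Finset.Icc (-(K : ℤ)) (K : ℤ),
      c k * Complex.exp (Complex.I * (k : ℂ) * ((2 * Real.pi / T : ℝ) : ℂ) * (u : ℂ)))
    (a d : ℝ) (ha : a ≠ 0) :
    ∀ s : Finset ℝ, (∀ u ∈ s, u ∈ Set.Ioc 0 T ∧ f u = ((a * u + d : ℝ) : ℂ)) →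
      s.card ≤ 2 * K + 1 := by
  intro s hs
  set ω : ℝ := 2 * Real.pi / T
  obtain rfl : f = trigPoly K c ω := funext hf
  set c' : ℤ → ℂ := fun k => I * k * ω * c k
  have hc' : ∀ k ∈ Icc (-(K : ℤ)) K, c' (-k) = conj (c' k) := fun k hk => by
    simp [c', hconj k hk]
  have hderiv : ∀ u : ℝ, HasDerivAt (fun u : ℝ => (trigPoly K c ω u).re - (a * u + d))
      ((trigPoly K c' ω u).re - a) u := fun u =>
    ((reCLM.hasFDerivAt.comp_hasDerivAt u (hasDerivAt_trigPoly K c ω u)).sub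
      (((hasDerivAt_id u).const_mul a).add_const d)).congr_deriv (by simp [c'])
  obtain ⟨t, hst, ht⟩ := exists_finset_hasDerivAt_eq_zero_card_le_succ Set.ordConnected_Ioc
    (fun u _ => hderiv u) s fun u hu => ⟨(hs u hu).1, by simp [(hs u hu).2]⟩
  have hzero : ∀ u ∈ t, trigPoly K (c' - Pi.single 0 (a : ℂ)) ω u = 0 := fun u hu => by
    rw [← trigPoly_sub_const, sub_eq_zero, ← conj_eq_iff_re.1 (conj_trigPoly hc' ω u),
      sub_eq_zero.1 (ht u hu).2]
  have hinj : Set.InjOn (fun u : ℝ => exp (I * ω * u)) t :=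
    (by simpa only [zero_add] using injOn_exp_mul_I_Ioc hT 0 : Set.InjOn _ (Set.Ioc 0 T)).mono
      fun u hu => (ht u hu).1
  have htK := card_le_of_trigPoly_eq_zero ⟨0, by simp, by simp [c', ha]⟩ hinj hzero
  omega

/-- **Case 2 of the appendix argument.** A real trigonometric polynomial of degree `K`
and period `T` intersects a straight line of nonzero slope at most `2K + 1` times within
one period `(0, T]`. Formally: every finite set of such intersection points has
cardinality at most `2K + 1`. -/
theorem trig_poly_line_intersections
    (K : ℕ) (hK : 0 < K) (T : ℝ) (hT : 0 < T)
    (c : ℤ → ℂ)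
    (hconj : ∀ k : ℤ, k ∈ Finset.Icc (-(K : ℤ)) (K : ℤ) →
      c (-k) = (starRingEnd ℂ) (c k))
    (f : ℝ → ℂ)
    (hf : ∀ u : ℝ, f u = ∑ k ∈ Finset.Icc (-(K : ℤ)) (K : ℤ),
      c k * Complex.exp (Complex.I * (k : ℂ) * ((2 * Real.pi / T : ℝ) : ℂ) * (u : ℂ)))
    (a d : ℝ) (ha : a ≠ 0) :
    ∀ s : Finset ℝ, (∀ u ∈ s, u ∈ Set.Ioc 0 T ∧ f u = ((a * u + d : ℝ) : ℂ)) →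
      s.card ≤ 2 * K + 1 :=
  trig_poly_line_intersections_general K T hT c hconj f hf a d ha
end
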